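/- Let α : [0,1] → ℝ be Lipschitz, E ⊆ [0,1], and (A^n) a sequence of finite partitions of [0,1] into sets A₁ⁿ,…,A_nⁿ with mesh |A^n| = max_i diam(A_iⁿ) → 0. Define d_*(E∩A) = max(1, inf_{t∈E∩A} α(t))·dimH(E∩A) and d^*(E∩A) = max(1, sup_{t∈E∩A} α(t))·dimH(E∩A) (interpreted as 0 when E∩A = ∅). Then limsup_{n→∞} max_{i=1}^n d^*(E ∩ A_iⁿ) = limsup_{n→∞} max_{i=1}^n d_*(E ∩ A_iⁿ), and the same equality holds with liminf in place of limsup. -/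

import Mathlib

open MeasureTheory Set Filter

open Classical in
noncomputable def dUpper (α : ℝ → ℝ) (E S : Set ℝ) : ℝ :=
  if (E ∩ S).Nonempty then
    max 1 (sSup (α '' (E ∩ S))) * (dimH (E ∩ S)).toReal else 0

open Classical in
noncomputable def dLower (α : ℝ → ℝ) (E S : Set ℝ) : ℝ :=
  if (E ∩ S).Nonempty then
    max 1 (sInf (α '' (E ∩ S))) * (dimH (E ∩ S)).toReal else 0

/-
On a piece `S`, the Lipschitz bound gives `sup α - inf α ≤ K · diam S` over `E ∩ S`,
and `dimH (E ∩ S) ≤ 1`, so `d_* ≤ d^* ≤ d_* + K · diam S`. Taking the maximum over the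
pieces, the two sequences of maxima are bounded and differ by at most `K · |Aⁿ| → 0`, so
they have the same `limsup` and the same `liminf`.
-/

open Topology Bornology
open scoped NNReal

section Sandwich

variable {ι : Type*} {l : Filter ι} {F G e : ι → ℝ}

theorem eventually_le_add_of_tendsto_zero (hFG : ∀ᶠ i in l, F i ≤ G i + e i)
    (he : Tendsto e l (𝓝 0)) {ε : ℝ} (hε : 0 < ε) : ∀ᶠ i in l, F i ≤ G i + ε := by
  filter_upwards [hFG, he.eventually (gt_mem_nhds hε)] with i hi hei
  linarith

theorem limsup_eq_limsup_of_le_of_le_add_tendsto_zero [l.NeBot] (hGF : G ≤ᶠ[l] F)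
    (hFG : ∀ᶠ i in l, F i ≤ G i + e i) (he : Tendsto e l (𝓝 0))
    (hF : IsBoundedUnder (· ≤ ·) l F) (hG : IsBoundedUnder (· ≥ ·) l G) :
    limsup F l = limsup G l := by
  have hG_le : IsBoundedUnder (· ≤ ·) l G := hF.mono_le hGF
  refine le_antisymm (le_of_forall_pos_le_add fun ε hε => ?_)
    (limsup_le_limsup hGF hG.isCoboundedUnder_le hF)
  calc limsup F l ≤ limsup (fun i => G i + ε) l :=
        limsup_le_limsup (eventually_le_add_of_tendsto_zero hFG he hε)
          (hG.mono_ge hGF).isCoboundedUnder_le (isBoundedUnder_le_add hG_le isBoundedUnder_const)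
    _ = limsup G l + ε := limsup_add_const l G ε hG_le hG.isCoboundedUnder_le

theorem liminf_eq_liminf_of_le_of_le_add_tendsto_zero [l.NeBot] (hGF : G ≤ᶠ[l] F)
    (hFG : ∀ᶠ i in l, F i ≤ G i + e i) (he : Tendsto e l (𝓝 0))
    (hF : IsBoundedUnder (· ≤ ·) l F) (hG : IsBoundedUnder (· ≥ ·) l G) :
    liminf F l = liminf G l := by
  have hG_le : IsBoundedUnder (· ≤ ·) l G := hF.mono_le hGF
  refine le_antisymm (le_of_forall_pos_le_add fun ε hε => ?_)
    (liminf_le_liminf hGF hG hF.isCoboundedUnder_ge)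
  calc liminf F l ≤ liminf (fun i => G i + ε) l :=
        liminf_le_liminf (eventually_le_add_of_tendsto_zero hFG he hε) (hG.mono_ge hGF)
          (isBoundedUnder_le_add hG_le isBoundedUnder_const).isCoboundedUnder_ge
    _ = liminf G l + ε := liminf_add_const l G ε hG_le.isCoboundedUnder_ge hG

end Sandwich

theorem dimH_toReal_le_one (S : Set ℝ) : (dimH S).toReal ≤ 1 := by
  have h : dimH S ≤ 1 := Real.dimH_univ ▸ dimH_mono (subset_univ S)
  simpa using ENNReal.toReal_mono ENNReal.one_ne_top h

section Pieces

variable {α : ℝ → ℝ} {E S : Set ℝ}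

theorem dLower_nonneg : 0 ≤ dLower α E S := by
  unfold dLower
  split_ifs
  · exact mul_nonneg (zero_le_one.trans (le_max_left _ _)) ENNReal.toReal_nonneg
  · exact le_rfl

theorem dUpper_le_max_one {B : ℝ} (hB : ∀ t ∈ E ∩ S, α t ≤ B) :
    dUpper α E S ≤ max 1 B := by
  unfold dUpper
  split_ifs with hne
  · have hsup : max 1 (sSup (α '' (E ∩ S))) ≤ max 1 B :=
      max_le_max le_rfl (csSup_le (hne.image α) (forall_mem_image.2 hB))
    calc max 1 (sSup (α '' (E ∩ S))) * (dimH (E ∩ S)).toReal ≤ max 1 B * 1 :=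
          mul_le_mul hsup (dimH_toReal_le_one _) ENNReal.toReal_nonneg
            (zero_le_one.trans (le_max_left _ _))
      _ = max 1 B := mul_one _
  · exact zero_le_one.trans (le_max_left _ _)

theorem dLower_le_dUpper (hbdd : IsBounded (α '' (E ∩ S))) :
    dLower α E S ≤ dUpper α E S := by
  unfold dLower dUpper
  split_ifs with hne
  · exact mul_le_mul_of_nonneg_right
      (max_le_max le_rfl (csInf_le_csSup (hne.image α) hbdd.bddBelow hbdd.bddAbove))
      ENNReal.toReal_nonneg
  · exact le_rfl

theorem dUpper_le_dLower_add {c : ℝ} (hc : 0 ≤ c)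
    (hosc : ∀ s ∈ E ∩ S, ∀ t ∈ E ∩ S, α s ≤ α t + c) :
    dUpper α E S ≤ dLower α E S + c := by
  unfold dUpper dLower
  split_ifs with hne
  · have hsup : sSup (α '' (E ∩ S)) ≤ sInf (α '' (E ∩ S)) + c := by
      refine csSup_le (hne.image α) (forall_mem_image.2 fun s hs => ?_)
      rw [← sub_le_iff_le_add]
      exact le_csInf (hne.image α) (forall_mem_image.2 fun t ht => by linarith [hosc s hs t ht])
    have hmax : max 1 (sSup (α '' (E ∩ S))) ≤ max 1 (sInf (α '' (E ∩ S))) + c :=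
      max_le (le_add_of_le_of_nonneg (le_max_left _ _) hc)
        (hsup.trans (by gcongr; exact le_max_right _ _))
    have hd0 : 0 ≤ (dimH (E ∩ S)).toReal := ENNReal.toReal_nonneg
    have hd1 := dimH_toReal_le_one (E ∩ S)
    nlinarith
  · rwa [zero_add]

theorem dUpper_le_dLower_add_mul_diam {T : Set ℝ} {L : ℝ≥0} (hα : LipschitzOnWith L α T)
    (hET : E ∩ S ⊆ T) (hS : IsBounded S) :
    dUpper α E S ≤ dLower α E S + L * Metric.diam S :=
  dUpper_le_dLower_add (mul_nonneg L.coe_nonneg Metric.diam_nonneg) fun s hs t ht =>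
    (hα.le_add_mul (hET hs) (hET ht)).trans <| by
      gcongr; exact Metric.dist_le_diam_of_mem hS hs.2 ht.2

variable {ι : Type*} (A : ι → Set ℝ)

theorem iSup_dLower_le_iSup_dUpper [Finite ι] (hbdd : IsBounded (α '' E)) :
    ⨆ i, dLower α E (A i) ≤ ⨆ i, dUpper α E (A i) :=
  ciSup_mono (finite_range _).bddAbove fun _ =>
    dLower_le_dUpper (hbdd.subset (image_mono inter_subset_left))

theorem iSup_dUpper_le_max_one [Nonempty ι] {B : ℝ} (hB : ∀ t ∈ E, α t ≤ B) :
    ⨆ i, dUpper α E (A i) ≤ max 1 B :=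
  ciSup_le fun _ => dUpper_le_max_one fun t ht => hB t ht.1

theorem iSup_dUpper_le_iSup_dLower_add_mul_iSup_diam [Finite ι] [Nonempty ι] {T : Set ℝ}
    {L : ℝ≥0} (hα : LipschitzOnWith L α T) (hET : E ⊆ T) (hA : ∀ i, IsBounded (A i)) :
    ⨆ i, dUpper α E (A i) ≤ (⨆ i, dLower α E (A i)) + L * ⨆ i, Metric.diam (A i) :=
  ciSup_le fun i => by
    have hpiece := dUpper_le_dLower_add_mul_diam hα (inter_subset_left.trans hET) (hA i)
    have hdLower := le_ciSup (finite_range fun j => dLower α E (A j)).bddAbove i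
    have hdiam := le_ciSup (finite_range fun j => Metric.diam (A j)).bddAbove i
    linarith [mul_le_mul_of_nonneg_left hdiam L.coe_nonneg]

end Pieces

theorem limsup_dUpper_eq_limsup_dLower_general
    (α : ℝ → ℝ) (K : ℝ)
    (hlip : ∀ s ∈ Set.Icc (0 : ℝ) 1, ∀ t ∈ Set.Icc (0 : ℝ) 1,
      |α s - α t| ≤ K * |s - t|)
    (E : Set ℝ) (hE : E ⊆ Set.Icc 0 1)
    (A : (n : ℕ) → Fin (n + 1) → Set ℝ)
    (hcover : ∀ n, ⋃ i, A n i = Set.Icc 0 1)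
    (hmesh : Tendsto (fun n => ⨆ i, Metric.diam (A n i)) atTop (nhds 0)) :
    limsup (fun n => ⨆ i, dUpper α E (A n i)) atTop
        = limsup (fun n => ⨆ i, dLower α E (A n i)) atTop ∧
      liminf (fun n => ⨆ i, dUpper α E (A n i)) atTop
        = liminf (fun n => ⨆ i, dLower α E (A n i)) atTop := by
  have hα : LipschitzOnWith K.toNNReal α (Icc 0 1) :=
    lipschitzOnWith_iff_dist_le_mul.2 fun s hs t ht => by
      simpa only [Real.dist_eq] using (hlip s hs t ht).trans
        (mul_le_mul_of_nonneg_right (Real.le_coe_toNNReal K) (abs_nonneg _))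
  have hαbdd : IsBounded (α '' E) :=
    (isCompact_Icc.image_of_continuousOn hα.continuousOn).isBounded.subset (image_mono hE)
  -- `Metric.diam` vanishes on unbounded sets, so the mesh controls nothing until the pieces are
  -- known to lie in `[0, 1]`.
  have hA : ∀ n i, IsBounded (A n i) := fun n i =>
    (Metric.isBounded_Icc 0 1).subset (hcover n ▸ subset_iUnion (A n) i)
  have hLU n := iSup_dLower_le_iSup_dUpper (A n) hαbdd
  have hUL n := iSup_dUpper_le_iSup_dLower_add_mul_iSup_diam (A n) hα hE (hA n)
  have hU_bdd : IsBoundedUnder (· ≤ ·) atTop fun n => ⨆ i, dUpper α E (A n i) :=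
    isBoundedUnder_of ⟨_, fun n => iSup_dUpper_le_max_one (A n) fun t ht =>
      le_csSup hαbdd.bddAbove (mem_image_of_mem α ht)⟩
  have hL_bdd : IsBoundedUnder (· ≥ ·) atTop fun n => ⨆ i, dLower α E (A n i) :=
    isBoundedUnder_of ⟨0, fun n => Real.iSup_nonneg fun _ => dLower_nonneg⟩
  have hmeshK :
      Tendsto (fun n => (K.toNNReal : ℝ) * ⨆ i, Metric.diam (A n i)) atTop (𝓝 0) := by
    simpa using hmesh.const_mul (K.toNNReal : ℝ)
  exact ⟨limsup_eq_limsup_of_le_of_le_add_tendsto_zero (.of_forall hLU) (.of_forall hUL) hmeshK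
      hU_bdd hL_bdd,
    liminf_eq_liminf_of_le_of_le_add_tendsto_zero (.of_forall hLU) (.of_forall hUL) hmeshK
      hU_bdd hL_bdd⟩

theorem limsup_dUpper_eq_limsup_dLower
    (α : ℝ → ℝ) (K : ℝ)
    (hlip : ∀ s ∈ Set.Icc (0 : ℝ) 1, ∀ t ∈ Set.Icc (0 : ℝ) 1,
      |α s - α t| ≤ K * |s - t|)
    (E : Set ℝ) (hE : E ⊆ Set.Icc 0 1)
    (A : (n : ℕ) → Fin (n + 1) → Set ℝ)
    (hcover : ∀ n, ⋃ i, A n i = Set.Icc 0 1)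
    (hdisj : ∀ n, Pairwise (Function.onFun Disjoint (A n)))
    (hmesh : Tendsto (fun n => ⨆ i, Metric.diam (A n i)) atTop (nhds 0)) :
    limsup (fun n => ⨆ i, dUpper α E (A n i)) atTop
        = limsup (fun n => ⨆ i, dLower α E (A n i)) atTop ∧
      liminf (fun n => ⨆ i, dUpper α E (A n i)) atTop
        = liminf (fun n => ⨆ i, dLower α E (A n i)) atTop :=
  limsup_dUpper_eq_limsup_dLower_general α K hlip E hE A hcover hmesh
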